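/- Let (S,K,I) be an active split graph (every vertex of S lies in some induced P4) such that σ_{uv}(S) ≤ 1 for all distinct u,v ∈ I, and let Φ' be the simple graph on vertex set I with u adjacent to v iff σ_{uv}(S) = 1; assume Φ' is connected. Then exactly one of the following holds: (1) Φ' is a complete graph and |K| = |I|; or (2) |K| equals the clique number of Φ', |K| < |I|, and every vertex of Φ' belongs to some maximum clique of Φ'; in particular, in case (2), |K| ≤ 1 + min{deg_{Φ'}(v) : v ∈ I}. -/
import Mathlib


open SimpleGraph

/-- `T` is a 4-element vertex subset of `S` whose induced subgraph is a path on 4 vertices. -/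
def IsInducedP4 {V : Type*} (S : SimpleGraph V) (T : Finset V) : Prop :=
  T.card = 4 ∧ Nonempty (S.induce (T : Set V) ≃g pathGraph 4)

/-- `σ_{uv}(S)`: the number of induced `P4`'s of `S` containing both `u` and `v`. -/
noncomputable def sigmaP4 {V : Type*} (S : SimpleGraph V) (u v : V) : ℕ :=
  Nat.card {T : Finset V // IsInducedP4 S T ∧ u ∈ T ∧ v ∈ T}

/-- The simple graph on vertex set `I` where `u` is adjacent to `v` iff `σ_{uv}(S) = 1`. -/
noncomputable def phiEq {V : Type*} (S : SimpleGraph V) (I : Finset V) :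
    SimpleGraph {x // x ∈ I} :=
  SimpleGraph.fromRel (fun u v => sigmaP4 S u.1 v.1 = 1)

section Aux

variable {V : Type*} [DecidableEq V]

lemma isInducedP4_mk (S : SimpleGraph V) (T : Finset V)
    (a b c d : V) (hT : T = {a,b,c,d}) (hab : a ≠ b) (hac : a ≠ c) (had : a ≠ d)
    (hbc : b ≠ c) (hbd : b ≠ d) (hcd : c ≠ d)
    (Aab : S.Adj a b) (Abc : S.Adj b c) (Acd : S.Adj c d)
    (Nac : ¬S.Adj a c) (Nad : ¬S.Adj a d) (Nbd : ¬S.Adj b d) : IsInducedP4 S T := by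
  have hcard : T.card = 4 := by
    rw [hT, Finset.card_insert_of_notMem (by simp [hab, hac, had]),
      Finset.card_insert_of_notMem (by simp [hbc, hbd]),
      Finset.card_insert_of_notMem (by simp [hcd]), Finset.card_singleton]
  refine ⟨hcard, ?_⟩
  have hm : ∀ x : V, x ∈ (T : Set V) ↔ x = a ∨ x = b ∨ x = c ∨ x = d := by
    intro x; rw [Finset.mem_coe, hT]; simp
  set g : Fin 4 → (T : Set V) := fun i =>
    ⟨![a,b,c,d] i, by fin_cases i <;> simp [hm]⟩ with hg
  set ginv := fun (x : (T : Set V)) =>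
    if x.1 = a then (0 : Fin 4) else if x.1 = b then 1 else if x.1 = c then 2 else 3
    with hginv
  have hgi : ∀ i, ginv (g i) = i := by
    intro i
    fin_cases i <;>
      simp [hginv, hg, hab, hac, had, hbc, hbd, hcd, hab.symm, hac.symm, had.symm, hbc.symm,
        hbd.symm, hcd.symm]
  have hig : ∀ x, g (ginv x) = x := by
    rintro ⟨x, hx⟩
    rcases (hm x).1 hx with h|h|h|h <;> subst h <;>
      apply Subtype.ext <;>
      simp [hginv, hg, hab, hac, had, hbc, hbd, hcd, hab.symm, hac.symm, had.symm, hbc.symm,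
        hbd.symm, hcd.symm]
  refine ⟨(RelIso.symm ⟨⟨g, ginv, hgi, hig⟩, ?_⟩ : S.induce (T : Set V) ≃g pathGraph 4)⟩
  intro i j
  fin_cases i <;> fin_cases j
  · exact iff_of_false (S.irrefl) (by rw [pathGraph_adj]; decide)
  · exact iff_of_true Aab (by rw [pathGraph_adj]; decide)
  · exact iff_of_false Nac (by rw [pathGraph_adj]; decide)
  · exact iff_of_false Nad (by rw [pathGraph_adj]; decide)
  · exact iff_of_true Aab.symm (by rw [pathGraph_adj]; decide)
  · exact iff_of_false (S.irrefl) (by rw [pathGraph_adj]; decide)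
  · exact iff_of_true Abc (by rw [pathGraph_adj]; decide)
  · exact iff_of_false Nbd (by rw [pathGraph_adj]; decide)
  · exact iff_of_false (fun h => Nac h.symm) (by rw [pathGraph_adj]; decide)
  · exact iff_of_true Abc.symm (by rw [pathGraph_adj]; decide)
  · exact iff_of_false (S.irrefl) (by rw [pathGraph_adj]; decide)
  · exact iff_of_true Acd (by rw [pathGraph_adj]; decide)
  · exact iff_of_false (fun h => Nad h.symm) (by rw [pathGraph_adj]; decide)
  · exact iff_of_false (fun h => Nbd h.symm) (by rw [pathGraph_adj]; decide)
  · exact iff_of_true Acd.symm (by rw [pathGraph_adj]; decide)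
  · exact iff_of_false (S.irrefl) (by rw [pathGraph_adj]; decide)

lemma isInducedP4_iff (S : SimpleGraph V) (T : Finset V) :
    IsInducedP4 S T ↔ ∃ a b c d : V, T = {a,b,c,d} ∧ a ≠ b ∧ a ≠ c ∧ a ≠ d ∧ b ≠ c ∧ b ≠ d ∧
      c ≠ d ∧ S.Adj a b ∧ S.Adj b c ∧ S.Adj c d ∧ ¬S.Adj a c ∧ ¬S.Adj a d ∧ ¬S.Adj b d := by
  constructor
  · rintro ⟨hcard, ⟨e⟩⟩
    set f : Fin 4 → V := fun i => (e.symm i : (T : Set V)).1 with hf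
    have hmem : ∀ i, f i ∈ T := fun i => (e.symm i).2
    have hinj : Function.Injective f := fun i j h => e.symm.injective (Subtype.ext h)
    have hne : ∀ i j : Fin 4, i ≠ j → f i ≠ f j := fun i j hij h => hij (hinj h)
    have hadj : ∀ i j : Fin 4, S.Adj (f i) (f j) ↔ (pathGraph 4).Adj i j := by
      intro i j
      have := e.symm.map_adj_iff (v := i) (w := j)
      simpa [comap_adj] using this
    have h01 := hne 0 1 (by decide); have h02 := hne 0 2 (by decide)
    have h03 := hne 0 3 (by decide); have h12 := hne 1 2 (by decide)
    have h13 := hne 1 3 (by decide); have h23 := hne 2 3 (by decide)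
    refine ⟨f 0, f 1, f 2, f 3, ?_, h01, h02, h03, h12, h13, h23, ?_, ?_, ?_, ?_, ?_, ?_⟩
    · apply (Finset.eq_of_subset_of_card_le ?_ ?_).symm
      · intro x hx
        simp only [Finset.mem_insert, Finset.mem_singleton] at hx
        rcases hx with h|h|h|h <;> (subst h; exact hmem _)
      · rw [hcard]
        rw [Finset.card_insert_of_notMem (by simp [h01, h02, h03]),
          Finset.card_insert_of_notMem (by simp [h12, h13]),
          Finset.card_insert_of_notMem (by simp [h23]), Finset.card_singleton]
    all_goals rw [hadj, pathGraph_adj]; decide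
  · rintro ⟨a, b, c, d, hT, hab, hac, had, hbc, hbd, hcd, Aab, Abc, Acd, Nac, Nad, Nbd⟩
    exact isInducedP4_mk S T a b c d hT hab hac had hbc hbd hcd Aab Abc Acd Nac Nad Nbd

/-- The core set-family counting lemma: a family of at least two `d`-subsets of `K`,
pairwise with one-element differences, covering `K` and co-covering `K`, has exactly
`|K|` members. -/
lemma nat_mul_eq_one {a b : ℕ} (h : a * b = 1) : a = 1 ∧ b = 1 := by
  rcases Nat.eq_zero_or_pos a with h0 | h0
  · simp [h0] at h
  rcases Nat.eq_zero_or_pos b with h1 | h1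
  · simp [h1] at h
  constructor <;> nlinarith

lemma coreCount (K : Finset V) (F : Finset (Finset V)) (d : ℕ)
    (hsub : ∀ A ∈ F, A ⊆ K) (hcard : ∀ A ∈ F, A.card = d)
    (hdist : ∀ A ∈ F, ∀ B ∈ F, A ≠ B → (A \ B).card = 1)
    (hmem : ∀ k ∈ K, ∃ A ∈ F, k ∈ A) (hmiss : ∀ k ∈ K, ∃ A ∈ F, k ∉ A)
    (hm2 : 2 ≤ F.card) : F.card = K.card := by
  obtain ⟨A1, hA1, C0, hC0, hA1C0⟩ := Finset.one_lt_card.mp (show 1 < F.card by omega)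
  have hd1 : 1 ≤ d := by
    have h1 := hdist A1 hA1 C0 hC0 hA1C0
    have : (A1 \ C0) ⊆ A1 := Finset.sdiff_subset
    have := Finset.card_le_card this
    rw [h1, hcard A1 hA1] at this
    omega
  rcases Nat.lt_or_ge d 2 with hd | hd
  · -- d = 1 : the family consists of disjoint singletons covering K
    have hdisj : ∀ A ∈ F, ∀ B ∈ F, A ≠ B → Disjoint A B := by
      intro A hA B hB hAB
      have h1 := hdist A hA B hB hAB
      have hsub' : A \ B ⊆ A := Finset.sdiff_subset
      have : A \ B = A := Finset.eq_of_subset_of_card_le hsub' (by rw [h1, hcard A hA]; omega)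
      rwa [Finset.sdiff_eq_self_iff_disjoint] at this
    have hKU : K = F.biUnion (fun A => A) := by
      apply Finset.Subset.antisymm
      · intro k hk
        obtain ⟨A, hA, hkA⟩ := hmem k hk
        exact Finset.mem_biUnion.mpr ⟨A, hA, hkA⟩
      · intro k hk
        obtain ⟨A, hA, hkA⟩ := Finset.mem_biUnion.mp hk
        exact hsub A hA hkA
    rw [hKU, Finset.card_biUnion hdisj]
    have : ∀ A ∈ F, A.card = 1 := by
      intro A hA; have := hcard A hA; omega
    rw [Finset.sum_congr rfl this, Finset.sum_const, smul_eq_mul, mul_one]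
  · -- d ≥ 2
    by_cases hbb : ∀ C ∈ F, C ≠ A1 → C \ A1 = C0 \ A1
    · -- sunflower case: all sets contained in B' = A1 ∪ C0, |B'| = d + 1
      set B' := A1 ∪ C0 with hB'
      have hsubB : ∀ A ∈ F, A ⊆ B' := by
        intro A hA x hx
        by_cases hxA1 : x ∈ A1
        · exact Finset.mem_union_left _ hxA1
        · by_cases hAA1 : A = A1
          · exact absurd (hAA1 ▸ hx) hxA1
          · have : x ∈ C0 \ A1 := (hbb A hA hAA1) ▸ (Finset.mem_sdiff.mpr ⟨hx, hxA1⟩)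
            exact Finset.mem_union_right _ (Finset.mem_sdiff.mp this).1
      have hcardB : B'.card = d + 1 := by
        have h1 : B' = A1 ∪ (C0 \ A1) := by rw [hB', Finset.union_sdiff_self_eq_union]
        rw [h1, Finset.card_union_of_disjoint Finset.disjoint_sdiff,
          hcard A1 hA1, hdist C0 hC0 A1 hA1 (Ne.symm hA1C0)]
      have hBA : ∀ A ∈ F, (B' \ A).card = 1 := by
        intro A hA
        rw [Finset.card_sdiff_of_subset (hsubB A hA), hcardB, hcard A hA]; omega
      have hrec : ∀ A ∈ F, B' \ (B' \ A) = A := fun A hA =>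
        Finset.sdiff_sdiff_eq_self (hsubB A hA)
      have hinj : Set.InjOn (fun A => B' \ A) F := by
        intro A hA B hB h
        have := congrArg (fun s => B' \ s) h
        simpa [hrec A hA, hrec B hB] using this
      have himg : F.image (fun A => B' \ A) = K.image (fun k => ({k} : Finset V)) := by
        apply Finset.Subset.antisymm
        · intro s hs
          obtain ⟨A, hA, rfl⟩ := Finset.mem_image.mp hs
          obtain ⟨x, hx⟩ := Finset.card_eq_one.mp (hBA A hA)
          obtain ⟨A', hA', hA'A⟩ := Finset.exists_mem_ne (show 1 < F.card by omega) A
          have hxA' : x ∈ A' := by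
            by_contra hxn
            have hxB : x ∈ B' := by
              have : x ∈ B' \ A := hx ▸ Finset.mem_singleton_self x
              exact (Finset.mem_sdiff.mp this).1
            have h2 : x ∈ B' \ A' := Finset.mem_sdiff.mpr ⟨hxB, hxn⟩
            have h3 : B' \ A' = {x} :=
              (Finset.eq_of_subset_of_card_le (Finset.singleton_subset_iff.mpr h2)
                (by rw [hBA A' hA']; exact Finset.card_singleton x ▸ le_refl 1)).symm
            exact hA'A (hinj (Finset.mem_coe.mpr hA') (Finset.mem_coe.mpr hA) (show B' \ A' = B' \ A by rw [h3, hx]))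
          have hxK : x ∈ K := hsub A' hA' hxA'
          exact Finset.mem_image.mpr ⟨x, hxK, hx.symm⟩
        · intro s hs
          obtain ⟨k, hk, rfl⟩ := Finset.mem_image.mp hs
          obtain ⟨A, hA, hkA⟩ := hmiss k hk
          obtain ⟨A'', hA'', hkA''⟩ := hmem k hk
          have hkB : k ∈ B' := hsubB A'' hA'' hkA''
          have h2 : k ∈ B' \ A := Finset.mem_sdiff.mpr ⟨hkB, hkA⟩
          have h3 : B' \ A = {k} :=
            (Finset.eq_of_subset_of_card_le (Finset.singleton_subset_iff.mpr h2)
              (by rw [hBA A hA]; exact Finset.card_singleton k ▸ le_refl 1)).symm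
          exact Finset.mem_image.mpr ⟨A, hA, h3⟩
      calc F.card = (F.image (fun A => B' \ A)).card := (Finset.card_image_of_injOn hinj).symm
        _ = (K.image (fun k => ({k} : Finset V))).card := by rw [himg]
        _ = K.card := Finset.card_image_of_injective _ (fun x y h => by
              simpa using Finset.singleton_injective h)
    · -- star case: common removed element, contradiction with co-covering
      push_neg at hbb
      obtain ⟨C1, hC1, hC1A1, hC1C0⟩ := hbb
      have key : ∀ C ∈ F, ∀ C' ∈ F, C ≠ A1 → C' ≠ A1 → C \ A1 ≠ C' \ A1 →
          A1 \ C = A1 \ C' := by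
        intro C hC C' hC' hCA1 hC'A1 hne
        have hCC' : C ≠ C' := fun h => hne (h ▸ rfl)
        obtain ⟨b1, hb1⟩ := Finset.card_eq_one.mp (hdist C hC A1 hA1 hCA1)
        obtain ⟨b2, hb2⟩ := Finset.card_eq_one.mp (hdist C' hC' A1 hA1 hC'A1)
        obtain ⟨a1, ha1⟩ := Finset.card_eq_one.mp (hdist A1 hA1 C hC (Ne.symm hCA1))
        obtain ⟨a2, ha2⟩ := Finset.card_eq_one.mp (hdist A1 hA1 C' hC' (Ne.symm hC'A1))
        have hb12 : b1 ≠ b2 := by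
          intro h; exact hne (by rw [hb1, hb2, h])
        rw [ha1, ha2]
        by_contra hne2
        have ha12 : a1 ≠ a2 := fun h => hne2 (h ▸ rfl)
        -- a2 ∈ C, a2 ∉ C', b1 ∈ C, b1 ∉ C' : so C \ C' has ≥ 2 elements
        have ha2A1 : a2 ∈ A1 := by
          have : a2 ∈ A1 \ C' := ha2 ▸ Finset.mem_singleton_self a2
          exact (Finset.mem_sdiff.mp this).1
        have ha2C' : a2 ∉ C' := by
          have : a2 ∈ A1 \ C' := ha2 ▸ Finset.mem_singleton_self a2
          exact (Finset.mem_sdiff.mp this).2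
        have ha2C : a2 ∈ C := by
          by_contra h
          have : a2 ∈ A1 \ C := Finset.mem_sdiff.mpr ⟨ha2A1, h⟩
          rw [ha1, Finset.mem_singleton] at this
          exact ha12 this.symm
        have hb1C : b1 ∈ C := by
          have : b1 ∈ C \ A1 := hb1 ▸ Finset.mem_singleton_self b1
          exact (Finset.mem_sdiff.mp this).1
        have hb1A1 : b1 ∉ A1 := by
          have : b1 ∈ C \ A1 := hb1 ▸ Finset.mem_singleton_self b1
          exact (Finset.mem_sdiff.mp this).2
        have hb1C' : b1 ∉ C' := by
          intro h
          have : b1 ∈ C' \ A1 := Finset.mem_sdiff.mpr ⟨h, hb1A1⟩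
          rw [hb2, Finset.mem_singleton] at this
          exact hb12 this
        have hsub2 : {b1, a2} ⊆ C \ C' := by
          intro x hx
          rcases Finset.mem_insert.mp hx with h | h
          · subst h; exact Finset.mem_sdiff.mpr ⟨hb1C, hb1C'⟩
          · rw [Finset.mem_singleton] at h; subst h
            exact Finset.mem_sdiff.mpr ⟨ha2C, ha2C'⟩
        have hb1a2 : b1 ≠ a2 := fun h => hb1A1 (h ▸ ha2A1)
        have : 2 ≤ (C \ C').card := by
          calc 2 = ({b1, a2} : Finset V).card := by
                rw [Finset.card_insert_of_notMem (by simp [hb1a2]), Finset.card_singleton]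
            _ ≤ (C \ C').card := Finset.card_le_card hsub2
        rw [hdist C hC C' hC' hCC'] at this
        omega
      obtain ⟨a1, ha1⟩ := Finset.card_eq_one.mp (hdist A1 hA1 C1 hC1 (Ne.symm hC1A1))
      have hcommon : ∀ C ∈ F, C ≠ A1 → A1 \ C = {a1} := by
        intro C hC hCA1
        by_cases h : C \ A1 = C1 \ A1
        · have h2 : C \ A1 ≠ C0 \ A1 := h ▸ hC1C0
          have := key C hC C0 hC0 hCA1 (Ne.symm hA1C0) h2
          have h3 := key C1 hC1 C0 hC0 hC1A1 (Ne.symm hA1C0) hC1C0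
          rw [this, ← h3, ha1]
        · rw [key C hC C1 hC1 hCA1 hC1A1 h, ha1]
      have hA1card : 1 < A1.card := by rw [hcard A1 hA1]; omega
      obtain ⟨k, hkA1, hka1⟩ := Finset.exists_mem_ne hA1card a1
      have hkall : ∀ C ∈ F, k ∈ C := by
        intro C hC
        by_cases h : C = A1
        · exact h ▸ hkA1
        · by_contra hk
          have : k ∈ A1 \ C := Finset.mem_sdiff.mpr ⟨hkA1, hk⟩
          rw [hcommon C hC h, Finset.mem_singleton] at this
          exact hka1 this
      obtain ⟨A, hA, hkA⟩ := hmiss k (hsub A1 hA1 hkA1)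
      exact absurd (hkall A hA) hkA

end Aux


section Split

variable {V : Type*} [Fintype V] [DecidableEq V]
variable {S : SimpleGraph V} [DecidableRel S.Adj] {K I : Finset V}
variable (hpart : K ∪ I = Finset.univ) (hdisj : Disjoint K I)
variable (hK : S.IsClique (K : Set V)) (hI : Sᶜ.IsClique (I : Set V))

include hpart hdisj hK hI

lemma p4_positions {a b c d : V} (hab : a ≠ b) (hac : a ≠ c) (had : a ≠ d) (hbc : b ≠ c)
    (hbd : b ≠ d) (hcd : c ≠ d) (Aab : S.Adj a b) (Abc : S.Adj b c) (Acd : S.Adj c d)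
    (Nac : ¬S.Adj a c) (Nad : ¬S.Adj a d) (Nbd : ¬S.Adj b d) :
    a ∈ I ∧ b ∈ K ∧ c ∈ K ∧ d ∈ I := by
  have hKor : ∀ x : V, x ∈ K ∨ x ∈ I := fun x =>
    Finset.mem_union.mp (hpart ▸ Finset.mem_univ x)
  have hKadj : ∀ x ∈ K, ∀ y ∈ K, x ≠ y → S.Adj x y := fun x hx y hy hxy =>
    hK (Finset.mem_coe.mpr hx) (Finset.mem_coe.mpr hy) hxy
  have hIn : ∀ x ∈ I, ∀ y ∈ I, x ≠ y → ¬S.Adj x y := by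
    intro x hx y hy hxy
    have := hI (Finset.mem_coe.mpr hx) (Finset.mem_coe.mpr hy) hxy
    exact (S.compl_adj x y).mp this |>.2
  have haI : a ∈ I := by
    rcases hKor a with haK | haI
    · have hcI : c ∈ I := by
        rcases hKor c with hcK | h
        · exact absurd (hKadj a haK c hcK hac) Nac
        · exact h
      have hdI : d ∈ I := by
        rcases hKor d with hdK | h
        · exact absurd (hKadj a haK d hdK had) Nad
        · exact h
      exact absurd Acd (hIn c hcI d hdI hcd)
    · exact haI
  have hdI : d ∈ I := by
    rcases hKor d with hdK | hdI
    · have hbI : b ∈ I := by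
        rcases hKor b with hbK | h
        · exact absurd (hKadj b hbK d hdK hbd) Nbd
        · exact h
      have haI' : a ∈ I := haI
      exact absurd Aab (hIn a haI' b hbI hab)
    · exact hdI
  have hbK : b ∈ K := by
    rcases hKor b with hbK | hbI
    · exact hbK
    · exact absurd Aab (hIn a haI b hbI hab)
  have hcK : c ∈ K := by
    rcases hKor c with hcK | hcI
    · exact hcK
    · exact absurd Acd (hIn c hcI d hdI hcd)
  exact ⟨haI, hbK, hcK, hdI⟩

set_option maxHeartbeats 1000000 in
lemma sigma_eq_prod {u v : V} (hu : u ∈ I) (hv : v ∈ I) (huv : u ≠ v) :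
    sigmaP4 S u v = (S.neighborFinset u \ S.neighborFinset v).card *
      (S.neighborFinset v \ S.neighborFinset u).card := by
  classical
  have hKor : ∀ x : V, x ∈ K ∨ x ∈ I := fun x =>
    Finset.mem_union.mp (hpart ▸ Finset.mem_univ x)
  have hIn : ∀ x ∈ I, ∀ y ∈ I, x ≠ y → ¬S.Adj x y := by
    intro x hx y hy hxy
    have := hI (Finset.mem_coe.mpr hx) (Finset.mem_coe.mpr hy) hxy
    exact (S.compl_adj x y).mp this |>.2
  have hadjK : ∀ i ∈ I, ∀ x : V, S.Adj i x → x ∈ K := by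
    intro i hi x hix
    rcases hKor x with h | h
    · exact h
    · exact absurd hix (hIn i hi x h hix.ne)
  set D1 := S.neighborFinset u \ S.neighborFinset v with hD1
  set D2 := S.neighborFinset v \ S.neighborFinset u with hD2
  have Nuv : ¬S.Adj u v := hIn u hu v hv huv
  have hfprop : ∀ p : {x // x ∈ D1} × {x // x ∈ D2},
      IsInducedP4 S {u, p.1.1, p.2.1, v} ∧ u ∈ ({u, p.1.1, p.2.1, v} : Finset V) ∧
        v ∈ ({u, p.1.1, p.2.1, v} : Finset V) := by
    rintro ⟨⟨b, hb⟩, ⟨c, hc⟩⟩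
    rw [hD1, Finset.mem_sdiff, S.mem_neighborFinset, S.mem_neighborFinset] at hb
    rw [hD2, Finset.mem_sdiff, S.mem_neighborFinset, S.mem_neighborFinset] at hc
    obtain ⟨Aub, Nvb⟩ := hb
    obtain ⟨Avc, Nuc⟩ := hc
    have hbK : b ∈ K := hadjK u hu b Aub
    have hcK : c ∈ K := hadjK v hv c Avc
    have hub : u ≠ b := Aub.ne
    have huc : u ≠ c := fun h => Nuv ((h ▸ Avc).symm)
    have hbc : b ≠ c := fun h => Nuc (h ▸ Aub)
    have hbv : b ≠ v := fun h => Nuv (h ▸ Aub)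
    have hcv : c ≠ v := Avc.ne'
    have Abc : S.Adj b c := hK (Finset.mem_coe.mpr hbK) (Finset.mem_coe.mpr hcK) hbc
    refine ⟨isInducedP4_mk S _ u b c v rfl hub huc huv hbc hbv hcv Aub Abc Avc.symm
      Nuc Nuv (fun h => Nvb h.symm), by simp, by simp⟩
  set f : {x // x ∈ D1} × {x // x ∈ D2} →
      {T : Finset V // IsInducedP4 S T ∧ u ∈ T ∧ v ∈ T} :=
    fun p => ⟨{u, p.1.1, p.2.1, v}, hfprop p⟩ with hfdef
  have hinj : Function.Injective f := by
    rintro ⟨⟨b, hb⟩, ⟨c, hc⟩⟩ ⟨⟨b', hb'⟩, ⟨c', hc'⟩⟩ h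
    have hsets : ({u, b, c, v} : Finset V) = {u, b', c', v} := congrArg Subtype.val h
    rw [hD1, Finset.mem_sdiff, S.mem_neighborFinset, S.mem_neighborFinset] at hb hb'
    rw [hD2, Finset.mem_sdiff, S.mem_neighborFinset, S.mem_neighborFinset] at hc hc'
    have hbb : b = b' := by
      have : b' ∈ ({u, b, c, v} : Finset V) := by rw [hsets]; simp
      simp only [Finset.mem_insert, Finset.mem_singleton] at this
      rcases this with h1 | h1 | h1 | h1
      · exact absurd (h1 ▸ hb'.1) (S.irrefl)
      · exact h1.symm
      · exact absurd (h1 ▸ hb'.1) hc.2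
      · exact absurd (h1 ▸ hb'.1) Nuv
    have hcc : c = c' := by
      have : c' ∈ ({u, b, c, v} : Finset V) := by rw [hsets]; simp
      simp only [Finset.mem_insert, Finset.mem_singleton] at this
      rcases this with h1 | h1 | h1 | h1
      · exact absurd (h1 ▸ hc'.1) (fun hh => Nuv (S.adj_symm hh))
      · exact absurd (h1 ▸ hc'.1) hb.2
      · exact h1.symm
      · exact absurd (h1 ▸ hc'.1) (S.irrefl)
    subst hbb; subst hcc; rfl
  have hsurj : Function.Surjective f := by
    rintro ⟨T, hP4, huT, hvT⟩
    obtain ⟨a, b, c, d, hT, hab, hac, had, hbc, hbd, hcd, Aab, Abc, Acd, Nac, Nad, Nbd⟩ :=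
      (isInducedP4_iff S T).mp hP4
    obtain ⟨haI, hbK, hcK, hdI⟩ := p4_positions hpart hdisj hK hI hab hac had hbc hbd hcd
      Aab Abc Acd Nac Nad Nbd
    have hnotKI : ∀ x : V, x ∈ K → x ∈ I → False := fun x h1 h2 =>
      Finset.disjoint_left.mp hdisj h1 h2
    have hu4 : u = a ∨ u = d := by
      have : u ∈ ({a, b, c, d} : Finset V) := hT ▸ huT
      simp only [Finset.mem_insert, Finset.mem_singleton] at this
      rcases this with h | h | h | h
      · exact Or.inl h
      · exact absurd hu (h ▸ fun hh => hnotKI b hbK hh)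
      · exact absurd hu (h ▸ fun hh => hnotKI c hcK hh)
      · exact Or.inr h
    have hv4 : v = a ∨ v = d := by
      have : v ∈ ({a, b, c, d} : Finset V) := hT ▸ hvT
      simp only [Finset.mem_insert, Finset.mem_singleton] at this
      rcases this with h | h | h | h
      · exact Or.inl h
      · exact absurd hv (h ▸ fun hh => hnotKI b hbK hh)
      · exact absurd hv (h ▸ fun hh => hnotKI c hcK hh)
      · exact Or.inr h
    rcases hu4 with hua | hud
    · rcases hv4 with hva | hvd
      · exact absurd (hua.trans hva.symm) huv
      · subst hua; subst hvd
        refine ⟨(⟨b, ?_⟩, ⟨c, ?_⟩), ?_⟩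
        · rw [hD1, Finset.mem_sdiff, S.mem_neighborFinset, S.mem_neighborFinset]
          exact ⟨Aab, fun h => Nbd h.symm⟩
        · rw [hD2, Finset.mem_sdiff, S.mem_neighborFinset, S.mem_neighborFinset]
          exact ⟨Acd.symm, Nac⟩
        · exact Subtype.ext hT.symm
    · rcases hv4 with hva | hvd
      · subst hud; subst hva
        refine ⟨(⟨c, ?_⟩, ⟨b, ?_⟩), ?_⟩
        · rw [hD1, Finset.mem_sdiff, S.mem_neighborFinset, S.mem_neighborFinset]
          exact ⟨Acd.symm, Nac⟩
        · rw [hD2, Finset.mem_sdiff, S.mem_neighborFinset, S.mem_neighborFinset]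
          exact ⟨Aab, fun h => Nbd h.symm⟩
        · apply Subtype.ext
          show ({u, c, b, v} : Finset V) = T
          rw [hT]; ext x; simp; tauto
      · exact absurd (hud.trans hvd.symm) huv
  have hcardeq : Nat.card ({x // x ∈ D1} × {x // x ∈ D2}) =
      Nat.card {T : Finset V // IsInducedP4 S T ∧ u ∈ T ∧ v ∈ T} :=
    Nat.card_eq_of_bijective f ⟨hinj, hsurj⟩
  show Nat.card {T : Finset V // IsInducedP4 S T ∧ u ∈ T ∧ v ∈ T} = D1.card * D2.card
  rw [← hcardeq, Nat.card_prod, Nat.card_eq_finsetCard, Nat.card_eq_finsetCard]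

end Split

theorem stmt18 {V : Type*} [Fintype V] [DecidableEq V] [Nonempty V]
    (S : SimpleGraph V) [DecidableRel S.Adj] (K I : Finset V)
    (hpart : K ∪ I = Finset.univ) (hdisj : Disjoint K I)
    (hK : S.IsClique (K : Set V)) (hI : Sᶜ.IsClique (I : Set V))
    (hact : ∀ x : V, ∃ T : Finset V, IsInducedP4 S T ∧ x ∈ T)
    (hsimple : ∀ u ∈ I, ∀ v ∈ I, u ≠ v → sigmaP4 S u v ≤ 1)
    (hconn : (phiEq S I).Connected) :
    Xor'
      ((∀ u v : {x // x ∈ I}, u ≠ v → (phiEq S I).Adj u v) ∧ K.card = I.card)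
      (K.card = (phiEq S I).cliqueNum ∧ K.card < I.card ∧
        (∀ v : {x // x ∈ I}, ∃ C : Finset {x // x ∈ I},
          (phiEq S I).IsNClique ((phiEq S I).cliqueNum) C ∧ v ∈ C) ∧
        ∀ v : {x // x ∈ I}, K.card ≤ 1 + ((phiEq S I).neighborSet v).ncard) := by
  classical
  set G := phiEq S I with hG
  set NN : V → Finset V := fun x => S.neighborFinset x with hNN
  have hKor : ∀ x : V, x ∈ K ∨ x ∈ I := fun x =>
    Finset.mem_union.mp (hpart ▸ Finset.mem_univ x)
  have hIn : ∀ x ∈ I, ∀ y ∈ I, x ≠ y → ¬S.Adj x y := by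
    intro x hx y hy hxy
    have := hI (Finset.mem_coe.mpr hx) (Finset.mem_coe.mpr hy) hxy
    exact (S.compl_adj x y).mp this |>.2
  have hadjK : ∀ i ∈ I, ∀ x : V, S.Adj i x → x ∈ K := by
    intro i hi x hix
    rcases hKor x with h | h
    · exact h
    · exact absurd hix (hIn i hi x h hix.ne)
  have hnotKI : ∀ x ∈ K, x ∈ I → False := fun x h1 h2 =>
    Finset.disjoint_left.mp hdisj h1 h2
  have hsig : ∀ u v : {x // x ∈ I}, u.1 ≠ v.1 →
      sigmaP4 S u.1 v.1 = (NN u.1 \ NN v.1).card * (NN v.1 \ NN u.1).card :=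
    fun u v h => sigma_eq_prod hpart hdisj hK hI u.2 v.2 h
  have hAdjIff : ∀ u v : {x // x ∈ I}, G.Adj u v ↔
      u ≠ v ∧ (NN u.1 \ NN v.1).card = 1 ∧ (NN v.1 \ NN u.1).card = 1 := by
    intro u v
    rw [hG, phiEq, fromRel_adj]
    constructor
    · rintro ⟨hne, h | h⟩
      · have hval : u.1 ≠ v.1 := fun hh => hne (Subtype.ext hh)
        rw [hsig u v hval] at h
        exact ⟨hne, nat_mul_eq_one h⟩
      · have hval : v.1 ≠ u.1 := fun hh => hne (Subtype.ext hh.symm)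
        rw [hsig v u hval] at h
        obtain ⟨h1, h2⟩ := nat_mul_eq_one h
        exact ⟨hne, h2, h1⟩
    · rintro ⟨hne, h1, h2⟩
      have hval : u.1 ≠ v.1 := fun hh => hne (Subtype.ext hh)
      exact ⟨hne, Or.inl (by rw [hsig u v hval, h1, h2])⟩
  have hdegAdj : ∀ u v, G.Adj u v → (NN u.1).card = (NN v.1).card := by
    intro u v h
    obtain ⟨hne, h1, h2⟩ := (hAdjIff u v).mp h
    have e1 := Finset.card_sdiff_add_card_inter (NN u.1) (NN v.1)
    have e2 := Finset.card_sdiff_add_card_inter (NN v.1) (NN u.1)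
    rw [Finset.inter_comm] at e2
    omega
  have hdegW : ∀ (u v : {x // x ∈ I}) (w : G.Walk u v), (NN u.1).card = (NN v.1).card := by
    intro u v w
    induction w with
    | nil => rfl
    | cons h p ih => exact (hdegAdj _ _ h).trans ih
  have hdegconst : ∀ u v : {x // x ∈ I}, (NN u.1).card = (NN v.1).card := by
    intro u v
    obtain ⟨w⟩ := hconn.preconnected u v
    exact hdegW u v w
  have hdich : ∀ u v : {x // x ∈ I}, u ≠ v → NN u.1 = NN v.1 ∨ G.Adj u v := by
    intro u v hne
    have hval : u.1 ≠ v.1 := fun hh => hne (Subtype.ext hh)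
    have hle := hsimple u.1 u.2 v.1 v.2 hval
    rw [hsig u v hval] at hle
    have e1 := Finset.card_sdiff_add_card_inter (NN u.1) (NN v.1)
    have e2 := Finset.card_sdiff_add_card_inter (NN v.1) (NN u.1)
    rw [Finset.inter_comm] at e2
    have hdd := hdegconst u v
    set c1 := (NN u.1 \ NN v.1).card with hc1
    set c2 := (NN v.1 \ NN u.1).card with hc2
    have hc12 : c1 = c2 := by omega
    rcases Nat.eq_zero_or_pos c1 with h0 | hpos
    · left
      have h02 : c2 = 0 := by omega
      have s1 : NN u.1 ⊆ NN v.1 := by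
        rw [← Finset.sdiff_eq_empty_iff_subset, ← Finset.card_eq_zero]; exact h0
      have s2 : NN v.1 ⊆ NN u.1 := by
        rw [← Finset.sdiff_eq_empty_iff_subset, ← Finset.card_eq_zero]; exact h02
      exact Finset.Subset.antisymm s1 s2
    · right
      have hc2pos : 0 < c2 := hc12 ▸ hpos
      have hle1 : c1 ≤ 1 := le_trans (Nat.le_mul_of_pos_right c1 hc2pos) hle
      have h1 : c1 = 1 := by omega
      exact (hAdjIff u v).mpr ⟨hne, h1, by omega⟩
  have hAdjIff' : ∀ u v, G.Adj u v ↔ u ≠ v ∧ NN u.1 ≠ NN v.1 := by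
    intro u v
    constructor
    · intro h
      obtain ⟨hne, h1, h2⟩ := (hAdjIff u v).mp h
      refine ⟨hne, fun he => ?_⟩
      rw [he, Finset.sdiff_self, Finset.card_empty] at h1
      exact one_ne_zero h1.symm
    · rintro ⟨hne, hNNe⟩
      rcases hdich u v hne with h | h
      · exact absurd h hNNe
      · exact h
  -- some vertex of I
  obtain ⟨x0⟩ := (inferInstance : Nonempty V)
  obtain ⟨T0, hT0, hx0⟩ := hact x0
  obtain ⟨a9, b9, c9, d9, hT9, hab9, hac9, had9, hbc9, hbd9, hcd9, Aab9, Abc9, Acd9,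
    Nac9, Nad9, Nbd9⟩ := (isInducedP4_iff S T0).mp hT0
  obtain ⟨ha9I, hb9K, hc9K, hd9I⟩ := p4_positions hpart hdisj hK hI hab9 hac9 had9 hbc9
    hbd9 hcd9 Aab9 Abc9 Acd9 Nac9 Nad9 Nbd9
  set i0 : {x // x ∈ I} := ⟨a9, ha9I⟩ with hi0
  -- activity facts
  have hactI : ∀ i ∈ I, ∃ j ∈ I, NN j ≠ NN i := by
    intro i hi
    obtain ⟨T, hT, hiT⟩ := hact i
    obtain ⟨a, b, c, d, hTeq, hab, hac, had, hbc, hbd, hcd, Aab, Abc, Acd, Nac, Nad, Nbd⟩ :=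
      (isInducedP4_iff S T).mp hT
    obtain ⟨haI, hbK, hcK, hdI⟩ := p4_positions hpart hdisj hK hI hab hac had hbc hbd hcd
      Aab Abc Acd Nac Nad Nbd
    have hNad : NN a ≠ NN d := by
      intro h
      have hb : b ∈ NN a := (S.mem_neighborFinset a b).mpr Aab
      rw [h] at hb
      exact Nbd ((S.mem_neighborFinset d b).mp hb).symm
    have hi4 : i = a ∨ i = d := by
      have : i ∈ ({a, b, c, d} : Finset V) := hTeq ▸ hiT
      simp only [Finset.mem_insert, Finset.mem_singleton] at this
      rcases this with h | h | h | h
      · exact Or.inl h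
      · exact absurd hi (h ▸ fun hh => hnotKI b hbK hh)
      · exact absurd hi (h ▸ fun hh => hnotKI c hcK hh)
      · exact Or.inr h
    rcases hi4 with rfl | rfl
    · exact ⟨d, hdI, Ne.symm hNad⟩
    · exact ⟨a, haI, hNad⟩
  have hactK : ∀ k ∈ K, (∃ i ∈ I, k ∈ NN i) ∧ (∃ i ∈ I, k ∉ NN i) := by
    intro k hk
    obtain ⟨T, hT, hkT⟩ := hact k
    obtain ⟨a, b, c, d, hTeq, hab, hac, had, hbc, hbd, hcd, Aab, Abc, Acd, Nac, Nad, Nbd⟩ :=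
      (isInducedP4_iff S T).mp hT
    obtain ⟨haI, hbK, hcK, hdI⟩ := p4_positions hpart hdisj hK hI hab hac had hbc hbd hcd
      Aab Abc Acd Nac Nad Nbd
    have hk4 : k = b ∨ k = c := by
      have : k ∈ ({a, b, c, d} : Finset V) := hTeq ▸ hkT
      simp only [Finset.mem_insert, Finset.mem_singleton] at this
      rcases this with h | h | h | h
      · exact absurd haI (h ▸ fun hh => hnotKI k hk hh)
      · exact Or.inl h
      · exact Or.inr h
      · exact absurd hdI (h ▸ fun hh => hnotKI k hk hh)
    rcases hk4 with rfl | rfl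
    · exact ⟨⟨a, haI, (S.mem_neighborFinset a k).mpr Aab⟩,
        ⟨d, hdI, fun h => Nbd ((S.mem_neighborFinset d k).mp h).symm⟩⟩
    · exact ⟨⟨d, hdI, (S.mem_neighborFinset d k).mpr Acd.symm⟩,
        ⟨a, haI, fun h => Nac ((S.mem_neighborFinset a k).mp h)⟩⟩
  set F : Finset (Finset V) := I.image NN with hF
  set m := F.card with hm
  have hcardF : ∀ A ∈ F, A.card = (NN a9).card := by
    intro A hA
    obtain ⟨i, hi, rfl⟩ := Finset.mem_image.mp hA
    exact hdegconst ⟨i, hi⟩ i0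
  have hdistF : ∀ A ∈ F, ∀ B ∈ F, A ≠ B → (A \ B).card = 1 := by
    intro A hA B hB hAB
    obtain ⟨i, hi, rfl⟩ := Finset.mem_image.mp hA
    obtain ⟨j, hj, rfl⟩ := Finset.mem_image.mp hB
    have hne : (⟨i, hi⟩ : {x // x ∈ I}) ≠ ⟨j, hj⟩ := fun h => hAB (by rw [Subtype.mk.injEq] at h; rw [h])
    have hADJ : G.Adj ⟨i, hi⟩ ⟨j, hj⟩ := (hAdjIff' _ _).mpr ⟨hne, hAB⟩
    exact ((hAdjIff _ _).mp hADJ).2.1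
  have hsubF : ∀ A ∈ F, A ⊆ K := by
    intro A hA
    obtain ⟨i, hi, rfl⟩ := Finset.mem_image.mp hA
    intro x hx
    exact hadjK i hi x ((S.mem_neighborFinset i x).mp hx)
  have hmemF : ∀ k ∈ K, ∃ A ∈ F, k ∈ A := by
    intro k hk
    obtain ⟨⟨i, hi, hki⟩, -⟩ := hactK k hk
    exact ⟨NN i, Finset.mem_image.mpr ⟨i, hi, rfl⟩, hki⟩
  have hmissF : ∀ k ∈ K, ∃ A ∈ F, k ∉ A := by
    intro k hk
    obtain ⟨-, ⟨i, hi, hki⟩⟩ := hactK k hk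
    exact ⟨NN i, Finset.mem_image.mpr ⟨i, hi, rfl⟩, hki⟩
  have hm2 : 2 ≤ m := by
    obtain ⟨j, hj, hne⟩ := hactI a9 ha9I
    have h1 : NN a9 ∈ F := Finset.mem_image.mpr ⟨a9, ha9I, rfl⟩
    have h2 : NN j ∈ F := Finset.mem_image.mpr ⟨j, hj, rfl⟩
    exact Finset.one_lt_card.mpr ⟨NN j, h2, NN a9, h1, hne⟩
  have hmK : m = K.card := coreCount K F (NN a9).card hsubF hcardF hdistF hmemF hmissF hm2
  have hclique_le : ∀ s : Finset {x // x ∈ I}, G.IsClique s → s.card ≤ m := by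
    intro s hs
    have himg : s.image (fun u => NN u.1) ⊆ F := by
      intro A hA
      obtain ⟨u, hu, rfl⟩ := Finset.mem_image.mp hA
      exact Finset.mem_image.mpr ⟨u.1, u.2, rfl⟩
    have hinjon : Set.InjOn (fun u : {x // x ∈ I} => NN u.1) s := by
      intro u hu w hw h
      by_contra hne
      exact ((hAdjIff' u w).mp (hs hu hw hne)).2 h
    calc s.card = (s.image (fun u => NN u.1)).card := (Finset.card_image_of_injOn hinjon).symm
      _ ≤ m := Finset.card_le_card himg
  have hclique_ex : ∀ v : {x // x ∈ I}, ∃ s, G.IsNClique m s ∧ v ∈ s := by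
    intro v
    set rep : Finset V → {x // x ∈ I} := fun A =>
      if A = NN v.1 then v else
        if h : ∃ u : {x // x ∈ I}, NN u.1 = A then h.choose else v with hrep
    have hrepv : rep (NN v.1) = v := by rw [hrep]; simp
    have hrepspec : ∀ A ∈ F, NN (rep A).1 = A := by
      intro A hA
      by_cases h : A = NN v.1
      · rw [h, hrepv]
      · obtain ⟨i, hi, hieq⟩ := Finset.mem_image.mp hA
        have hex : ∃ u : {x // x ∈ I}, NN u.1 = A := ⟨⟨i, hi⟩, hieq⟩
        rw [hrep]; simp only [if_neg h, dif_pos hex]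
        exact hex.choose_spec
    set s := F.image rep with hsdef
    have hinj2 : Set.InjOn rep F := fun A hA B hB h => by
      rw [← hrepspec A hA, ← hrepspec B hB, h]
    have hcards : s.card = m := Finset.card_image_of_injOn hinj2
    have hcl : G.IsClique s := by
      intro u hu w hw hne
      obtain ⟨A, hA, rfl⟩ := Finset.mem_image.mp hu
      obtain ⟨B, hB, rfl⟩ := Finset.mem_image.mp hw
      have hABne : A ≠ B := fun h => hne (h ▸ rfl)
      refine (hAdjIff' _ _).mpr ⟨hne, ?_⟩
      rw [hrepspec A hA, hrepspec B hB]
      exact hABne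
    have hvs : v ∈ s := by
      have hNv : NN v.1 ∈ F := Finset.mem_image.mpr ⟨v.1, v.2, rfl⟩
      exact Finset.mem_image.mpr ⟨NN v.1, hNv, hrepv⟩
    exact ⟨s, ⟨hcl, hcards⟩, hvs⟩
  have hclnum : G.cliqueNum = m := by
    obtain ⟨s, ⟨hcl, hcards⟩, -⟩ := hclique_ex i0
    have hmax : G.IsMaximumClique s :=
      ⟨hcl, fun t ht => (hclique_le t ht).trans_eq hcards.symm⟩
    rw [← maximumClique_card_eq_cliqueNum s hmax, hcards]
  have hmleI : m ≤ I.card := Finset.card_image_le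
  by_cases hcomp : ∀ u v : {x // x ∈ I}, u ≠ v → (phiEq S I).Adj u v
  · left
    have hinjN : Set.InjOn NN I := by
      intro i hi j hj h
      by_contra hne
      have hne' : (⟨i, hi⟩ : {x // x ∈ I}) ≠ ⟨j, hj⟩ := fun hh => hne (by
        rw [Subtype.mk.injEq] at hh; exact hh)
      exact ((hAdjIff' _ _).mp (hcomp _ _ hne')).2 h
    have hmI : m = I.card := Finset.card_image_of_injOn hinjN
    refine ⟨⟨hcomp, by omega⟩, ?_⟩
    rintro ⟨-, hlt, -⟩
    omega
  · right
    push_neg at hcomp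
    obtain ⟨u, v, hneuv, hnadj⟩ := hcomp
    have hNNeq : NN u.1 = NN v.1 := by
      rcases hdich u v hneuv with h | h
      · exact h
      · exact absurd h hnadj
    have hmlt : m < I.card := by
      refine lt_of_le_of_ne hmleI (fun heq => ?_)
      have hinjN : Set.InjOn NN I := Finset.injOn_of_card_image_eq (by rw [← hF, ← hm, heq])
      exact hneuv (Subtype.ext (hinjN u.2 v.2 hNNeq))
    refine ⟨⟨by rw [hclnum]; omega, by omega, ?_, ?_⟩, ?_⟩
    · intro w
      obtain ⟨s, hs, hws⟩ := hclique_ex w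
      exact ⟨s, by rw [hclnum]; exact hs, hws⟩
    · intro w
      obtain ⟨s, ⟨hcl, hcards⟩, hws⟩ := hclique_ex w
      have hsub2 : ((s.erase w : Finset _) : Set {x // x ∈ I}) ⊆ G.neighborSet w := by
        intro x hx
        have hx' := Finset.mem_coe.mp hx
        obtain ⟨hxw, hxs⟩ := Finset.mem_erase.mp hx'
        exact hcl (Finset.mem_coe.mpr hws) (Finset.mem_coe.mpr hxs) (Ne.symm hxw)
      have h1 : (s.erase w).card = m - 1 := by
        rw [Finset.card_erase_of_mem hws, hcards]
      have h2 : (s.erase w).card ≤ (G.neighborSet w).ncard := by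
        rw [← Set.ncard_coe_finset]
        exact Set.ncard_le_ncard hsub2 (Set.toFinite _)
      omega
    · rintro ⟨hcomp', -⟩
      exact hnadj (hcomp' u v hneuv)
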